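/- Let F = f_N and K = k_N², and define δ: U → U by δ(x) = F x - K x K^{-1} F. Then for every element x of the subalgebra of U generated by f_1, …, f_{N-1}, there exists an integer n ≥ 0 such that δⁿ(x) = 0. -/
import Mathlib


noncomputable section

open FreeAlgebra

/-- `𝕜 = F(q)`, the field of rational functions over `F`. -/
abbrev kk (F : Type) [Field F] : Type := RatFunc F

/-- The variable `q`. -/
def qq (F : Type) [Field F] : kk F := RatFunc.X

/-- `v = q²`. -/
def vv (F : Type) [Field F] : kk F := qq F ^ 2

/-- The balanced quantum integer `[n]_v`. -/
def qint (F : Type) [Field F] (n : ℤ) : kk F :=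
  (vv F ^ n - vv F ^ (-n)) / (vv F - (vv F)⁻¹)

/-- The quantum factorial `[m]_v!`. -/
def qfact (F : Type) [Field F] (m : ℕ) : kk F :=
  ∏ j ∈ Finset.Icc 1 m, qint F j

/-- The balanced Gaussian binomial coefficient `C(n,i)_v`. -/
def qbinom (F : Type) [Field F] (n i : ℕ) : kk F :=
  qfact F n / (qfact F i * qfact F (n - i))

/-- The Cartan matrix of `sl(N+1)`, with 1-based indices. -/
def cartan (i j : ℕ) : ℤ :=
  if i = j then 2 else if i + 1 = j ∨ j + 1 = i then -1 else 0

/-- Generators of `U_q(sl(N+1))`: `e i`, `f i`, `k i`, `kinv i` (0-based `i : Fin N`,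
corresponding to the 1-based index `i+1`). -/
inductive Gen (N : ℕ) : Type
  | e : Fin N → Gen N
  | f : Fin N → Gen N
  | k : Fin N → Gen N
  | kinv : Fin N → Gen N

/-- The defining relations of `U_q(sl(N+1))`. -/
inductive UqRel (F : Type) [Field F] (N : ℕ) :
    FreeAlgebra (kk F) (Gen N) → FreeAlgebra (kk F) (Gen N) → Prop
  | kkinv (i : Fin N) : UqRel F N (ι (kk F) (Gen.k i) * ι (kk F) (Gen.kinv i)) 1
  | kinvk (i : Fin N) : UqRel F N (ι (kk F) (Gen.kinv i) * ι (kk F) (Gen.k i)) 1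
  | kcomm (i j : Fin N) :
      UqRel F N (ι (kk F) (Gen.k i) * ι (kk F) (Gen.k j))
        (ι (kk F) (Gen.k j) * ι (kk F) (Gen.k i))
  | ke (i j : Fin N) :
      UqRel F N (ι (kk F) (Gen.k i) * ι (kk F) (Gen.e j) * ι (kk F) (Gen.kinv i))
        ((qq F ^ cartan ((i : ℕ) + 1) ((j : ℕ) + 1)) • ι (kk F) (Gen.e j))
  | kf (i j : Fin N) :
      UqRel F N (ι (kk F) (Gen.k i) * ι (kk F) (Gen.f j) * ι (kk F) (Gen.kinv i))
        ((qq F ^ (-cartan ((i : ℕ) + 1) ((j : ℕ) + 1))) • ι (kk F) (Gen.f j))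
  | ef (i j : Fin N) :
      UqRel F N (ι (kk F) (Gen.e i) * ι (kk F) (Gen.f j) - ι (kk F) (Gen.f j) * ι (kk F) (Gen.e i))
        (if i = j then
          ((qq F ^ 2 - qq F ^ (-2 : ℤ))⁻¹) •
            ((ι (kk F) (Gen.k i)) ^ 2 - (ι (kk F) (Gen.kinv i)) ^ 2)
        else 0)
  | serre_e_near (i j : Fin N) (h : (i : ℕ) + 1 = j ∨ (j : ℕ) + 1 = i) :
      UqRel F N
        ((ι (kk F) (Gen.e i)) ^ 2 * ι (kk F) (Gen.e j)
          - (qq F ^ 2 + qq F ^ (-2 : ℤ)) •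
              (ι (kk F) (Gen.e i) * ι (kk F) (Gen.e j) * ι (kk F) (Gen.e i))
          + ι (kk F) (Gen.e j) * (ι (kk F) (Gen.e i)) ^ 2) 0
  | serre_f_near (i j : Fin N) (h : (i : ℕ) + 1 = j ∨ (j : ℕ) + 1 = i) :
      UqRel F N
        ((ι (kk F) (Gen.f i)) ^ 2 * ι (kk F) (Gen.f j)
          - (qq F ^ 2 + qq F ^ (-2 : ℤ)) •
              (ι (kk F) (Gen.f i) * ι (kk F) (Gen.f j) * ι (kk F) (Gen.f i))
          + ι (kk F) (Gen.f j) * (ι (kk F) (Gen.f i)) ^ 2) 0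
  | serre_e_far (i j : Fin N) (h : (i : ℕ) + 1 < j ∨ (j : ℕ) + 1 < i) :
      UqRel F N (ι (kk F) (Gen.e i) * ι (kk F) (Gen.e j))
        (ι (kk F) (Gen.e j) * ι (kk F) (Gen.e i))
  | serre_f_far (i j : Fin N) (h : (i : ℕ) + 1 < j ∨ (j : ℕ) + 1 < i) :
      UqRel F N (ι (kk F) (Gen.f i) * ι (kk F) (Gen.f j))
        (ι (kk F) (Gen.f j) * ι (kk F) (Gen.f i))

/-- The quantized enveloping algebra `U = U_q(sl(N+1))`. -/
abbrev Uq (F : Type) [Field F] (N : ℕ) : Type := RingQuot (UqRel F N)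

variable (F : Type) [Field F] (N : ℕ)

/-- The image of a generator in `U`. -/
def gen (g : Gen N) : Uq F N := RingQuot.mkAlgHom (kk F) (UqRel F N) (ι (kk F) g)

/-- `e_i` (1-based index `1 ≤ i ≤ N`; junk value `0` outside this range). -/
def egen (i : ℕ) : Uq F N :=
  if h : 1 ≤ i ∧ i ≤ N then gen F N (Gen.e ⟨i - 1, by omega⟩) else 0

/-- `f_i` (1-based index). -/
def fgen (i : ℕ) : Uq F N :=
  if h : 1 ≤ i ∧ i ≤ N then gen F N (Gen.f ⟨i - 1, by omega⟩) else 0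

/-- `k_i` (1-based index). -/
def kgen (i : ℕ) : Uq F N :=
  if h : 1 ≤ i ∧ i ≤ N then gen F N (Gen.k ⟨i - 1, by omega⟩) else 0

/-- `k_i⁻¹` (1-based index). -/
def kinvgen (i : ℕ) : Uq F N :=
  if h : 1 ≤ i ∧ i ≤ N then gen F N (Gen.kinv ⟨i - 1, by omega⟩) else 0

/-- Auxiliary recursion: `fword i d = f_{i, i+1+d}`. -/
def fword (i : ℕ) : ℕ → Uq F N
  | 0 => fgen F N i
  | d + 1 =>
      qq F • (fword i d * fgen F N (i + 1 + d)) -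
        (qq F)⁻¹ • (fgen F N (i + 1 + d) * fword i d)

/-- The quantum root vector `f_{i,j}` (for `1 ≤ i < j ≤ N+1`). -/
def fij (i j : ℕ) : Uq F N := fword F N i (j - i - 1)

/-- Product of `f_{a,b}` over successive entries of a list. -/
def fList : List ℕ → Uq F N
  | a :: b :: rest => fij F N a b * fList (b :: rest)
  | _ => 1

/-- `f_S` for a finite set `S` of indices. -/
def fSet (S : Finset ℕ) : Uq F N := fList F N (S.sort (· ≤ ·))

/-- The index set `𝕀` of subsets of `{1,…,N+1}` containing `1` and `N+1`. -/
def II : Finset (Finset ℕ) :=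
  (Finset.Icc 1 (N + 1)).powerset.filter fun I => 1 ∈ I ∧ N + 1 ∈ I

/-- `r(I) = {s - 1 : s ∈ {1,…,N+1} \ I}`. -/
def rSet (I : Finset ℕ) : Finset ℕ := (Finset.Icc 1 (N + 1) \ I).image (· - 1)

/-- `k_{σ_i} = k_1 ⋯ k_i`. -/
def kσ (i : ℕ) : Uq F N := ((List.range i).map fun j => kgen F N (j + 1)).prod

/-- `K_{σ_i} = k_{σ_i}²`. -/
def Kσ (i : ℕ) : Uq F N := kσ F N i ^ 2

/-- `k_{σ_i}⁻¹ = k_1⁻¹ ⋯ k_i⁻¹`. -/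
def kσinv (i : ℕ) : Uq F N := ((List.range i).map fun j => kinvgen F N (j + 1)).prod

/-- `K_{σ_i}⁻¹`. -/
def KσInv (i : ℕ) : Uq F N := kσinv F N i ^ 2

/-- The element `h_i = -q⁻¹ v^{-(i-1)} K_{σ_i}⁻¹ (K_{σ_i} v^i - K_{σ_i}⁻¹ v^{-i})/(v - v⁻¹) ∈ U`. -/
def hElt (i : ℕ) : Uq F N :=
  (-(qq F)⁻¹ * vv F ^ (1 - (i : ℤ)) * (vv F - (vv F)⁻¹)⁻¹) •
    (KσInv F N i * (vv F ^ (i : ℤ) • Kσ F N i - vv F ^ (-(i : ℤ)) • KσInv F N i))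

/-- `H_I = ∏_{i ∈ r(I)} h_i` (product taken in increasing order of indices). -/
def HI (I : Finset ℕ) : Uq F N := (((rSet N I).sort (· ≤ ·)).map (hElt F N)).prod

/-- A weight `λ` is recorded by its values `(λ, α_j)` for `1 ≤ j ≤ N`;
`pairσ lam i = (λ, σ_i) = (λ, α_1 + ⋯ + α_i)`. -/
def pairσ (lam : ℕ → ℤ) (i : ℕ) : ℤ := ∑ j ∈ Finset.Icc 1 i, lam j

/-- The scalar `h_i(λ) = -q⁻¹ v^{-((λ,σ_i)+i-1)} [(λ,σ_i)+i]_v`. -/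
def hval (lam : ℕ → ℤ) (i : ℕ) : kk F :=
  -(qq F)⁻¹ * vv F ^ (-(pairσ lam i + (i : ℤ) - 1)) * qint F (pairσ lam i + (i : ℤ))

/-- The scalar `H_I(λ) = ∏_{i ∈ r(I)} h_i(λ)`. -/
def HIval (lam : ℕ → ℤ) (I : Finset ℕ) : kk F := ∏ i ∈ rSet N I, hval F lam i

/-- The left ideal `J_λ` of `U` generated by `e_1, …, e_N` and the `k_j - q^{(λ,α_j)}`. -/
def vermaIdeal (lam : ℕ → ℤ) : Submodule (Uq F N) (Uq F N) :=
  Submodule.span (Uq F N)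
    ({x | ∃ j, 1 ≤ j ∧ j ≤ N ∧ x = egen F N j} ∪
      {x | ∃ j, 1 ≤ j ∧ j ≤ N ∧
        x = kgen F N j - algebraMap (kk F) (Uq F N) (qq F ^ lam j)})

/-- The Verma module `M(λ) = U/J_λ`. -/
abbrev Verma (lam : ℕ → ℤ) : Type := Uq F N ⧸ vermaIdeal F N lam

/-- The highest weight vector `v_λ`, the image of `1` in `M(λ)`. -/
def hw (lam : ℕ → ℤ) : Verma F N lam := Submodule.Quotient.mk 1

/-- The candidate Shapovalov element `Θ_η = Σ_{I ∈ 𝕀} f_I H_I`. -/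
def Theta : Uq F N := ∑ I ∈ II N, fSet F N I * HI F N I

/-- `D^n(λ)`: the `(n-1) × (n-1)` matrix over `U` with `(i,j)` entry (1-based)
`f_{i,j+1}` if `i ≤ j`, `-h_j(λ)·1` if `i = j+1`, and `0` otherwise. -/
def Dmat (lam : ℕ → ℤ) (n : ℕ) : Matrix (Fin (n - 1)) (Fin (n - 1)) (Uq F N) :=
  Matrix.of fun i j =>
    if (i : ℕ) ≤ (j : ℕ) then fij F N ((i : ℕ) + 1) ((j : ℕ) + 2)
    else if (i : ℕ) = (j : ℕ) + 1 then
      -(algebraMap (kk F) (Uq F N) (hval F lam ((j : ℕ) + 1)))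
    else 0

/-- The left-to-right determinant of a matrix with noncommutative entries. -/
def ldet {m : ℕ} (B : Matrix (Fin m) (Fin m) (Uq F N)) : Uq F N :=
  ∑ w : Equiv.Perm (Fin m),
    ((Equiv.Perm.sign w : ℤˣ) : ℤ) • ((List.finRange m).map fun j => B (w j) j).prod

end

section Aux14

variable (F : Type) [Field F] {N : ℕ}

lemma qq_ne_zero14 : qq F ≠ 0 := RatFunc.X_ne_zero

lemma gen_k_kinv14 (i : Fin N) :
    gen F N (Gen.k i) * gen F N (Gen.kinv i) = 1 := by
  have h0 := RingQuot.mkAlgHom_rel (kk F) (UqRel.kkinv (F := F) i)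
  rw [map_mul, map_one] at h0
  exact h0

lemma gen_kinv_k14 (i : Fin N) :
    gen F N (Gen.kinv i) * gen F N (Gen.k i) = 1 := by
  have h0 := RingQuot.mkAlgHom_rel (kk F) (UqRel.kinvk (F := F) i)
  rw [map_mul, map_one] at h0
  exact h0

lemma gen_kfkinv14 (i j : Fin N) :
    gen F N (Gen.k i) * gen F N (Gen.f j) * gen F N (Gen.kinv i) =
      (qq F ^ (-cartan ((i : ℕ) + 1) ((j : ℕ) + 1))) • gen F N (Gen.f j) := by
  have h0 := RingQuot.mkAlgHom_rel (kk F) (UqRel.kf (F := F) i j)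
  rw [map_mul, map_mul, map_smul] at h0
  exact h0

lemma gen_kf14 (i j : Fin N) :
    gen F N (Gen.k i) * gen F N (Gen.f j) =
      (qq F ^ (-cartan ((i : ℕ) + 1) ((j : ℕ) + 1))) •
        (gen F N (Gen.f j) * gen F N (Gen.k i)) := by
  calc gen F N (Gen.k i) * gen F N (Gen.f j)
      = gen F N (Gen.k i) * gen F N (Gen.f j) *
          (gen F N (Gen.kinv i) * gen F N (Gen.k i)) := by
        rw [gen_kinv_k14, mul_one]
    _ = (gen F N (Gen.k i) * gen F N (Gen.f j) * gen F N (Gen.kinv i)) *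
          gen F N (Gen.k i) := by rw [← mul_assoc]
    _ = _ := by rw [gen_kfkinv14, smul_mul_assoc]

lemma gen_fkinv14 (i j : Fin N) :
    gen F N (Gen.f j) * gen F N (Gen.kinv i) =
      (qq F ^ (-cartan ((i : ℕ) + 1) ((j : ℕ) + 1))) •
        (gen F N (Gen.kinv i) * gen F N (Gen.f j)) := by
  calc gen F N (Gen.f j) * gen F N (Gen.kinv i)
      = (gen F N (Gen.kinv i) * gen F N (Gen.k i)) *
          gen F N (Gen.f j) * gen F N (Gen.kinv i) := by
        rw [gen_kinv_k14, one_mul]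
    _ = gen F N (Gen.kinv i) *
          (gen F N (Gen.k i) * gen F N (Gen.f j) * gen F N (Gen.kinv i)) := by
        rw [mul_assoc, mul_assoc, mul_assoc]
    _ = _ := by rw [gen_kfkinv14, mul_smul_comm]

lemma gen_kinvf14 (i j : Fin N) :
    gen F N (Gen.kinv i) * gen F N (Gen.f j) =
      (qq F ^ (cartan ((i : ℕ) + 1) ((j : ℕ) + 1))) •
        (gen F N (Gen.f j) * gen F N (Gen.kinv i)) := by
  rw [gen_fkinv14, smul_smul, ← zpow_add₀ (qq_ne_zero14 F)]
  simp

private lemma sqrel14 (k f : Uq F N) (c : kk F) (h : k * f = c • (f * k)) :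
    k * k * f = (c * c) • (f * (k * k)) := by
  calc k * k * f = k * (k * f) := mul_assoc _ _ _
    _ = k * (c • (f * k)) := by rw [h]
    _ = c • (k * (f * k)) := mul_smul_comm _ _ _
    _ = c • (k * f * k) := by rw [mul_assoc]
    _ = c • ((c • (f * k)) * k) := by rw [h]
    _ = (c * c) • (f * (k * k)) := by rw [smul_mul_assoc, smul_smul, mul_assoc]

lemma K_f14 (i j : Fin N) :
    gen F N (Gen.k i) ^ 2 * gen F N (Gen.f j) =
      (qq F ^ (-2 * cartan ((i : ℕ) + 1) ((j : ℕ) + 1))) •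
        (gen F N (Gen.f j) * gen F N (Gen.k i) ^ 2) := by
  rw [pow_two, sqrel14 F _ _ _ (gen_kf14 F i j), ← zpow_add₀ (qq_ne_zero14 F)]
  congr 1
  ring

lemma Kinv_f14 (i j : Fin N) :
    gen F N (Gen.kinv i) ^ 2 * gen F N (Gen.f j) =
      (qq F ^ (2 * cartan ((i : ℕ) + 1) ((j : ℕ) + 1))) •
        (gen F N (Gen.f j) * gen F N (Gen.kinv i) ^ 2) := by
  rw [pow_two, sqrel14 F _ _ _ (gen_kinvf14 F i j), ← zpow_add₀ (qq_ne_zero14 F)]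
  congr 1
  ring

lemma KKinv14 (i : Fin N) :
    gen F N (Gen.k i) ^ 2 * gen F N (Gen.kinv i) ^ 2 = 1 := by
  rw [pow_two, pow_two, mul_assoc, ← mul_assoc (gen F N (Gen.k i)) (gen F N (Gen.kinv i)),
    gen_k_kinv14, one_mul, gen_k_kinv14]

lemma KinvK14 (i : Fin N) :
    gen F N (Gen.kinv i) ^ 2 * gen F N (Gen.k i) ^ 2 = 1 := by
  rw [pow_two, pow_two, mul_assoc, ← mul_assoc (gen F N (Gen.kinv i)) (gen F N (Gen.k i)),
    gen_kinv_k14, one_mul, gen_kinv_k14]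

lemma serre_f_near14 (i j : Fin N) (h : (i : ℕ) + 1 = j ∨ (j : ℕ) + 1 = i) :
    gen F N (Gen.f i) ^ 2 * gen F N (Gen.f j)
      - (qq F ^ 2 + qq F ^ (-2 : ℤ)) •
          (gen F N (Gen.f i) * gen F N (Gen.f j) * gen F N (Gen.f i))
      + gen F N (Gen.f j) * gen F N (Gen.f i) ^ 2 = 0 := by
  have h0 := RingQuot.mkAlgHom_rel (kk F) (UqRel.serre_f_near (F := F) i j h)
  simp only [map_add, map_sub, map_smul, map_mul, map_pow, map_zero] at h0
  exact h0

lemma comm_f_far14 (i j : Fin N) (h : (i : ℕ) + 1 < j ∨ (j : ℕ) + 1 < i) :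
    gen F N (Gen.f i) * gen F N (Gen.f j) = gen F N (Gen.f j) * gen F N (Gen.f i) := by
  have h0 := RingQuot.mkAlgHom_rel (kk F) (UqRel.serre_f_far (F := F) i j h)
  rw [map_mul, map_mul] at h0
  exact h0

end Aux14
/-- with `F = f_N`, `K = k_N²` and `δ(x) = F x - K x K⁻¹ F`,
for every `x` in the subalgebra of `U` generated by `f_1, …, f_{N-1}`
there exists `n ≥ 0` with `δⁿ(x) = 0`. -/
theorem stmt14 (F : Type) [Field F] (N : ℕ) (hN : 1 ≤ N)
    (δ : Uq F N → Uq F N)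
    (hδ : ∀ x, δ x = fgen F N N * x -
      (kgen F N N) ^ 2 * x * (kinvgen F N N) ^ 2 * fgen F N N)
    (x : Uq F N)
    (hx : x ∈ Algebra.adjoin (kk F)
      {y : Uq F N | ∃ i, 1 ≤ i ∧ i ≤ N - 1 ∧ y = fgen F N i}) :
    ∃ n : ℕ, δ^[n] x = 0 := by
  classical
  have hq0 : qq F ≠ 0 := qq_ne_zero14 F
  have hNN : N - 1 < N := by omega
  set iN : Fin N := ⟨N - 1, hNN⟩ with hiNdef
  set f : Uq F N := gen F N (Gen.f iN) with hfdef
  set K : Uq F N := gen F N (Gen.k iN) ^ 2 with hKdef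
  set K' : Uq F N := gen F N (Gen.kinv iN) ^ 2 with hK'def
  have hfgenN : fgen F N N = f := by
    unfold fgen; rw [dif_pos ⟨hN, le_rfl⟩]
  have hkgenN : kgen F N N = gen F N (Gen.k iN) := by
    unfold kgen; rw [dif_pos ⟨hN, le_rfl⟩]
  have hkigenN : kinvgen F N N = gen F N (Gen.kinv iN) := by
    unfold kinvgen; rw [dif_pos ⟨hN, le_rfl⟩]
  have hδ' : ∀ z, δ z = f * z - K * z * K' * f := by
    intro z; rw [hδ, hfgenN, hkgenN, hkigenN]
  have hKK' : K * K' = 1 := KKinv14 F iN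
  have hK'K : K' * K = 1 := KinvK14 F iN
  have hcNN : cartan ((iN : ℕ) + 1) ((iN : ℕ) + 1) = 2 := by
    show cartan (N - 1 + 1) (N - 1 + 1) = 2
    unfold cartan; rw [if_pos rfl]
  have hKf : K * f = (qq F ^ (-4 : ℤ)) • (f * K) := by
    have h := K_f14 F iN iN
    rw [hcNN, show (-2 * 2 : ℤ) = -4 by norm_num] at h
    exact h
  have hK'f : K' * f = (qq F ^ (4 : ℤ)) • (f * K') := by
    have h := Kinv_f14 F iN iN
    rw [hcNN, show (2 * 2 : ℤ) = 4 by norm_num] at h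
    exact h
  -- conjugation helpers
  have conjeval : ∀ (a : Uq F N) (c : kk F), K * a = c • (a * K) → K * a * K' = c • a := by
    intro a c h
    rw [h, smul_mul_assoc, mul_assoc, hKK', mul_one]
  have conjmul : ∀ (a b : Uq F N) (c d : kk F), K * a = c • (a * K) → K * b = d • (b * K) →
      K * (a * b) = (c * d) • (a * b * K) := by
    intro a b c d ha hb
    calc K * (a * b) = K * a * b := (mul_assoc _ _ _).symm
      _ = (c • (a * K)) * b := by rw [ha]
      _ = c • (a * (K * b)) := by rw [smul_mul_assoc, mul_assoc]
      _ = c • (a * (d • (b * K))) := by rw [hb]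
      _ = (c * d) • (a * (b * K)) := by rw [mul_smul_comm, smul_smul]
      _ = (c * d) • (a * b * K) := by rw [mul_assoc]
  -- basic properties of δ
  have hδ0 : δ 0 = 0 := by rw [hδ']; simp
  have hδadd : ∀ a b, δ (a + b) = δ a + δ b := by
    intro a b; rw [hδ', hδ', hδ']; noncomm_ring
  have hδsmul : ∀ (c : kk F) a, δ (c • a) = c • δ a := by
    intro c a; rw [hδ', hδ']
    simp only [mul_smul_comm, smul_mul_assoc, smul_sub]
  have leib : ∀ a b, δ (a * b) = δ a * b + (K * a * K') * δ b := by
    intro a b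
    have h1 : K' * (K * b * K') = b * K' := by
      rw [mul_assoc K b K', ← mul_assoc K' K, hK'K, one_mul]
    have hmid : K * a * K' * (K * b * K') = K * (a * b) * K' := by
      calc K * a * K' * (K * b * K') = (K * a) * (K' * (K * b * K')) := by
            rw [mul_assoc]
        _ = (K * a) * (b * K') := by rw [h1]
        _ = K * (a * b) * K' := by rw [← mul_assoc, mul_assoc K a b]
    rw [hδ' a, hδ' b, hδ' (a * b), sub_mul, mul_sub, ← hmid]
    simp only [mul_assoc]
    abel
  have hfK' : f * K' = (qq F ^ (-4 : ℤ)) • (K' * f) := by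
    rw [hK'f, smul_smul, ← zpow_add₀ hq0, show (-4 + 4 : ℤ) = 0 by norm_num, zpow_zero, one_smul]
  have twist : ∀ a, δ (K * a * K') = (qq F ^ (4 : ℤ)) • (K * (δ a) * K') := by
    intro a
    have t1 : (qq F ^ (4 : ℤ)) • (K * (f * a) * K') = f * (K * a * K') := by
      rw [← mul_assoc K f a, hKf, smul_mul_assoc, smul_mul_assoc, smul_smul,
        ← zpow_add₀ hq0, show (4 + -4 : ℤ) = 0 by norm_num, zpow_zero, one_smul]
      noncomm_ring
    have t2 : (qq F ^ (4 : ℤ)) • (K * ((K * a * K') * f) * K') = K * (K * a * K') * K' * f := by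
      rw [← mul_assoc K (K * a * K') f, mul_assoc (K * (K * a * K')) f K', hfK',
        mul_smul_comm, smul_smul, ← zpow_add₀ hq0, show (4 + -4 : ℤ) = 0 by norm_num,
        zpow_zero, one_smul]
      noncomm_ring
    rw [hδ' a, hδ' (K * a * K'), mul_sub K (f * a), sub_mul, smul_sub, t1, t2]
  -- iterates
  have it0 : ∀ n, δ^[n] (0 : Uq F N) = 0 := fun n => Function.iterate_fixed hδ0 n
  have itadd : ∀ n a b, δ^[n] (a + b) = δ^[n] a + δ^[n] b := by
    intro n
    induction n with
    | zero => intro a b; simp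
    | succ n ih =>
        intro a b
        rw [Function.iterate_succ_apply, Function.iterate_succ_apply,
          Function.iterate_succ_apply, hδadd, ih]
  have itsmul : ∀ n (c : kk F) a, δ^[n] (c • a) = c • δ^[n] a := by
    intro n
    induction n with
    | zero => intro c a; simp
    | succ n ih =>
        intro c a
        rw [Function.iterate_succ_apply, Function.iterate_succ_apply, hδsmul, ih]
  have itmono : ∀ m k a, δ^[m] a = 0 → δ^[k + m] a = 0 := by
    intro m k a h
    rw [Function.iterate_add_apply, h, it0]
  have twistIter : ∀ n a, δ^[n] a = 0 → δ^[n] (K * a * K') = 0 := by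
    intro n
    induction n with
    | zero =>
        intro a h
        simp only [Function.iterate_zero, id_eq] at h ⊢
        rw [h, mul_zero, zero_mul]
    | succ n ih =>
        intro a h
        rw [Function.iterate_succ_apply] at h ⊢
        rw [twist, itsmul, ih (δ a) h, smul_zero]
  have mulClosure : ∀ s m n a b, m + n ≤ s → δ^[m] a = 0 → δ^[n] b = 0 →
      δ^[m + n] (a * b) = 0 := by
    intro s
    induction s with
    | zero =>
        intro m n a b hs ha hb
        have hm : m = 0 := by omega
        have hn : n = 0 := by omega
        subst hm; subst hn
        simp only [Function.iterate_zero, id_eq] at ha hb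
        rw [ha, zero_mul]
        exact it0 _
    | succ s ih =>
        intro m n a b hs ha hb
        rcases Nat.eq_zero_or_pos m with hm0 | hm0
        · subst hm0
          simp only [Function.iterate_zero, id_eq] at ha
          rw [ha, zero_mul]
          exact it0 _
        rcases Nat.eq_zero_or_pos n with hn0 | hn0
        · subst hn0
          simp only [Function.iterate_zero, id_eq] at hb
          rw [hb, mul_zero]
          exact it0 _
        obtain ⟨m', rfl⟩ : ∃ m', m = m' + 1 := ⟨m - 1, by omega⟩
        obtain ⟨n', rfl⟩ : ∃ n', n = n' + 1 := ⟨n - 1, by omega⟩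
        have e : (m' + 1) + (n' + 1) = (m' + (n' + 1)) + 1 := by omega
        rw [e, Function.iterate_succ_apply, leib, itadd]
        have ha' : δ^[m'] (δ a) = 0 := by rw [← Function.iterate_succ_apply]; exact ha
        have hb' : δ^[n'] (δ b) = 0 := by rw [← Function.iterate_succ_apply]; exact hb
        have t1 : δ^[m' + (n' + 1)] (δ a * b) = 0 := ih m' (n' + 1) (δ a) b (by omega) ha' hb
        have t2 : δ^[(m' + 1) + n'] ((K * a * K') * δ b) = 0 :=
          ih (m' + 1) n' (K * a * K') (δ b) (by omega) (twistIter _ _ ha) hb'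
        rw [t1, zero_add, show m' + (n' + 1) = (m' + 1) + n' by omega, t2]
  -- main induction
  induction hx using Algebra.adjoin_induction with
  | mem y hy =>
      obtain ⟨i, h1, h2, rfl⟩ := hy
      have hjlt : i - 1 < N := by omega
      have hfi : fgen F N i = gen F N (Gen.f ⟨i - 1, hjlt⟩) := by
        unfold fgen; rw [dif_pos ⟨h1, by omega⟩]
      by_cases hcase : i + 1 < N
      · -- far commutation: δ (f_i) = 0
        refine ⟨1, ?_⟩
        simp only [Function.iterate_one]
        rw [hfi, hδ']
        have hcomm : f * gen F N (Gen.f ⟨i - 1, hjlt⟩) =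
            gen F N (Gen.f ⟨i - 1, hjlt⟩) * f := by
          rw [hfdef]
          exact comm_f_far14 F iN ⟨i - 1, hjlt⟩ (Or.inr (show i - 1 + 1 < N - 1 by omega))
        have hcar : cartan ((iN : ℕ) + 1) (((⟨i - 1, hjlt⟩ : Fin N) : ℕ) + 1) = 0 := by
          show cartan (N - 1 + 1) (i - 1 + 1) = 0
          unfold cartan
          rw [if_neg (by omega), if_neg (by omega)]
        have hKg : K * gen F N (Gen.f ⟨i - 1, hjlt⟩) =
            gen F N (Gen.f ⟨i - 1, hjlt⟩) * K := by
          have h := K_f14 F iN ⟨i - 1, hjlt⟩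
          rw [hcar, show (-2 * 0 : ℤ) = 0 by norm_num, zpow_zero, one_smul] at h
          exact h
        rw [hKg, mul_assoc _ K K', hKK', mul_one, hcomm, sub_self]
      · -- near case: i = N - 1, N ≥ 2, needs δ² = 0 via the Serre relation
        have hi : i = N - 1 ∧ 2 ≤ N := by omega
        refine ⟨2, ?_⟩
        set g : Uq F N := gen F N (Gen.f ⟨i - 1, hjlt⟩) with hgdef
        have hcar : cartan ((iN : ℕ) + 1) (((⟨i - 1, hjlt⟩ : Fin N) : ℕ) + 1) = -1 := by
          show cartan (N - 1 + 1) (i - 1 + 1) = -1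
          unfold cartan
          rw [if_neg (by omega), if_pos (by omega)]
        have hKg : K * g = (qq F ^ (2 : ℤ)) • (g * K) := by
          have h := K_f14 F iN ⟨i - 1, hjlt⟩
          rw [hcar, show (-2 * (-1) : ℤ) = 2 by norm_num] at h
          exact h
        have hS := serre_f_near14 F iN ⟨i - 1, hjlt⟩
          (Or.inr (show i - 1 + 1 = N - 1 by omega))
        rw [← hfdef, ← hgdef] at hS
        have hKgK' : K * g * K' = (qq F ^ (2 : ℤ)) • g := conjeval _ _ hKg
        have hδg : δ g = f * g - (qq F ^ (2 : ℤ)) • (g * f) := by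
          rw [hδ', hKgK', smul_mul_assoc]
        have hKfg : K * (f * g) * K' = (qq F ^ (-2 : ℤ)) • (f * g) := by
          have h := conjeval _ _ (conjmul _ _ _ _ hKf hKg)
          rw [← zpow_add₀ hq0, show (-4 + 2 : ℤ) = -2 by norm_num] at h
          exact h
        have hKgf : K * (g * f) * K' = (qq F ^ (-2 : ℤ)) • (g * f) := by
          have h := conjeval _ _ (conjmul _ _ _ _ hKg hKf)
          rw [← zpow_add₀ hq0, show (2 + -4 : ℤ) = -2 by norm_num] at h
          exact h
        have hKδg : K * (δ g) * K' = (qq F ^ (-2 : ℤ)) • (f * g) - g * f := by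
          rw [hδg, mul_sub, sub_mul, mul_smul_comm, smul_mul_assoc, hKfg, hKgf,
            smul_smul, ← zpow_add₀ hq0, show (2 + -2 : ℤ) = 0 by norm_num,
            zpow_zero, one_smul]
        rw [hfi]
        show δ (δ g) = 0
        rw [hδ' (δ g), hKδg, hδg, mul_sub, mul_smul_comm, sub_mul, smul_mul_assoc,
          ← mul_assoc f f g, ← mul_assoc f g f, mul_assoc g f f, ← pow_two f]
        rw [show qq F ^ 2 = qq F ^ (2 : ℤ) from by rw [← zpow_natCast]; norm_num,
          add_smul] at hS
        have hre : f ^ 2 * g - (qq F ^ (2 : ℤ)) • (f * g * f) -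
            ((qq F ^ (-2 : ℤ)) • (f * g * f) - g * f ^ 2) =
            f ^ 2 * g - ((qq F ^ (2 : ℤ)) • (f * g * f) +
              (qq F ^ (-2 : ℤ)) • (f * g * f)) + g * f ^ 2 := by abel
        rw [hre]
        exact hS
  | algebraMap r =>
      refine ⟨1, ?_⟩
      simp only [Function.iterate_one]
      rw [hδ']
      have h1 : K * algebraMap (kk F) (Uq F N) r = algebraMap (kk F) (Uq F N) r * K :=
        (Algebra.commutes r K).symm
      rw [h1, mul_assoc _ K K', hKK', mul_one, Algebra.commutes r f, sub_self]
  | add a b ha hb pa pb =>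
      obtain ⟨m, hm⟩ := pa
      obtain ⟨n, hn⟩ := pb
      refine ⟨max m n, ?_⟩
      have h1 : δ^[max m n] a = 0 := by
        rw [show max m n = (max m n - m) + m by omega]
        exact itmono m _ a hm
      have h2 : δ^[max m n] b = 0 := by
        rw [show max m n = (max m n - n) + n by omega]
        exact itmono n _ b hn
      rw [itadd, h1, h2, add_zero]
  | mul a b ha hb pa pb =>
      obtain ⟨m, hm⟩ := pa
      obtain ⟨n, hn⟩ := pb
      exact ⟨m + n, mulClosure (m + n) m n a b le_rfl hm hn⟩
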